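/- The function z ↦ 1/(πz) is a fundamental solution of the ∂̄ operator on ℂ: for any smooth compactly supported f : ℂ → ℂ, the function u(z) = (1/(π·)) ∗ f (z) = ∫_{ℂ} f(w)/(π(z-w)) dA(w) satisfies ∂_{z̄} u = f. -/

import Mathlib

open Complex

/-- Partial derivative in the x-direction (real direction 1). -/
noncomputable def pdx (f : ℂ → ℂ) (z : ℂ) : ℂ := fderiv ℝ f z 1

/-- Partial derivative in the y-direction (real direction i). -/
noncomputable def pdy (f : ℂ → ℂ) (z : ℂ) : ℂ := fderiv ℝ f z Complex.I

/-- Wirtinger derivative ∂_z = (∂_x - i ∂_y)/2. -/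
noncomputable def dz (f : ℂ → ℂ) (z : ℂ) : ℂ := (pdx f z - Complex.I * pdy f z) / 2

/-- Wirtinger derivative ∂_z̄ = (∂_x + i ∂_y)/2. -/
noncomputable def dzbar (f : ℂ → ℂ) (z : ℂ) : ℂ := (pdx f z + Complex.I * pdy f z) / 2

/-- Laplacian Δ = ∂_x² + ∂_y². -/
noncomputable def lap (f : ℂ → ℂ) (z : ℂ) : ℂ := pdx (pdx f) z + pdy (pdy f) z

open MeasureTheory Set Real Metric Filter Topology Convolution

namespace DbarAux

/-- The fundamental solution kernel `1/(π w)`. -/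
noncomputable def kk : ℂ → ℂ := fun w => ((Real.pi : ℂ) * w)⁻¹

theorem clm_decomp (T : ℂ →L[ℝ] ℂ) (v : ℂ) :
    T v = (T 1 - Complex.I * T Complex.I) / 2 * v
        + (T 1 + Complex.I * T Complex.I) / 2 * (starRingEnd ℂ) v := by
  have hv : v = (v.re : ℝ) • (1:ℂ) + (v.im : ℝ) • Complex.I := by
    simp [Complex.real_smul, Complex.re_add_im]
  rw [show T v = T ((v.re : ℝ) • (1:ℂ) + (v.im : ℝ) • Complex.I) from by rw [← hv]]
  rw [map_add, T.map_smul, T.map_smul]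
  have hc : (starRingEnd ℂ) v = (v.re : ℂ) - v.im * Complex.I := by
    simp [Complex.ext_iff]
  nth_rewrite 3 [hv]
  rw [hc]
  simp only [Complex.real_smul]
  ring_nf
  simp only [Complex.I_sq]
  ring

theorem fderiv_decomp (f : ℂ → ℂ) (q v : ℂ) :
    fderiv ℝ f q v = dz f q * v + dzbar f q * (starRingEnd ℂ) v := by
  have := clm_decomp (fderiv ℝ f q) v
  simpa [dz, dzbar, pdx, pdy] using this

lemma bint (c : ℝ) : IntegrableOn (fun x : ℝ => |x| ^ (-(1/2) : ℝ)) (Icc (-c) c) := by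
  set b : ℝ → ℝ := fun x : ℝ => |x| ^ (-(1/2) : ℝ) with hb
  have key : ∀ d : ℝ, 0 ≤ d → IntegrableOn b (Ioc 0 d) := by
    intro d hd
    have h := intervalIntegral.intervalIntegrable_rpow' (a := 0) (b := d) (r := -(1/2))
      (by norm_num)
    have := (intervalIntegrable_iff_integrableOn_Ioc_of_le hd).mp h
    exact this.congr_fun (fun x hx => by rw [hb]; simp [abs_of_pos hx.1]) measurableSet_Ioc
  set d := |c| + 1 with hd
  have hd0 : 0 ≤ d := by positivity
  have hpos := key d hd0
  have hneg : IntegrableOn b (Ioc (-d) 0) := by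
    have h1 : IntervalIntegrable b volume 0 d :=
      (intervalIntegrable_iff_integrableOn_Ioc_of_le hd0).mpr hpos
    have h2 := (IntervalIntegrable.iff_comp_neg (f := b) (a := d) (b := 0)).mp h1.symm
    have h3 : IntervalIntegrable b volume (-d) 0 := by
      simpa [hb, abs_neg] using h2
    exact (intervalIntegrable_iff_integrableOn_Ioc_of_le (by linarith)).mp h3
  have : IntegrableOn b (Ioc (-d) 0 ∪ Ioc 0 d) := hneg.union hpos
  refine this.mono_set ?_
  intro x hx
  rcases le_or_gt x 0 with h | h
  · exact Or.inl ⟨by rcases abs_cases c with ⟨h1,h2⟩|⟨h1,h2⟩ <;> simp_all <;> linarith [hx.1], h⟩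
  · exact Or.inr ⟨h, by rcases abs_cases c with ⟨h1,h2⟩|⟨h1,h2⟩ <;> simp_all <;> nlinarith [hx.2]⟩

lemma axes_null : volume ({w : ℂ | w.re = 0} ∪ {w : ℂ | w.im = 0}) = 0 := by
  have e := Complex.volume_preserving_equiv_real_prod
  have h1 : volume ({w : ℂ | w.re = 0}) = 0 := by
    have hs : {w : ℂ | w.re = 0} = Complex.measurableEquivRealProd ⁻¹' ({0} ×ˢ univ) := by
      ext w; simp [Complex.measurableEquivRealProd, Complex.equivRealProd, eq_comm]
    rw [hs, e.measure_preimage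
      (((MeasurableSet.singleton 0).prod MeasurableSet.univ)).nullMeasurableSet,
      Measure.volume_eq_prod, Measure.prod_prod]
    simp
  have h2 : volume ({w : ℂ | w.im = 0}) = 0 := by
    have hs : {w : ℂ | w.im = 0} = Complex.measurableEquivRealProd ⁻¹' (univ ×ˢ {0}) := by
      ext w; simp [Complex.measurableEquivRealProd, Complex.equivRealProd, eq_comm]
    rw [hs, e.measure_preimage
      ((MeasurableSet.univ.prod (MeasurableSet.singleton 0))).nullMeasurableSet,
      Measure.volume_eq_prod, Measure.prod_prod]
    simp
  exact le_antisymm (le_trans (measure_union_le _ _) (by simp [h1, h2])) (zero_le)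

lemma kk_int_ball (R : ℝ) : IntegrableOn kk (closedBall (0:ℂ) R) := by
  set N : ℂ → ℝ := fun w => (|w.re| ^ (-(1/2) : ℝ)) * (|w.im| ^ (-(1/2) : ℝ)) with hNdef
  have hNint : IntegrableOn N (closedBall (0:ℂ) R) := by
    have hT : IntegrableOn (fun p : ℝ × ℝ => (|p.1| ^ (-(1/2) : ℝ)) * (|p.2| ^ (-(1/2) : ℝ)))
        (Icc (-R) R ×ˢ Icc (-R) R) (volume : Measure (ℝ × ℝ)) := by
      rw [IntegrableOn, Measure.volume_eq_prod, ← Measure.prod_restrict]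
      exact Integrable.mul_prod (bint R) (bint R)
    have := (Complex.volume_preserving_equiv_real_prod.integrableOn_comp_preimage
      Complex.measurableEquivRealProd.measurableEmbedding).mpr hT
    refine this.mono_set ?_
    intro w hw
    have hw' := mem_closedBall_zero_iff.mp hw
    have h1 : |w.re| ≤ R := (Complex.abs_re_le_norm w).trans (by simpa using hw')
    have h2 : |w.im| ≤ R := (Complex.abs_im_le_norm w).trans (by simpa using hw')
    simp only [mem_preimage, Complex.measurableEquivRealProd, Complex.equivRealProd]
    constructor <;> constructor <;> [skip; skip; skip; skip] <;>
      simp_all [abs_le] <;> linarith [abs_nonneg w.re, abs_nonneg w.im,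
        neg_abs_le w.re, le_abs_self w.re, neg_abs_le w.im, le_abs_self w.im]
  have hmeas : AEStronglyMeasurable kk (volume.restrict (closedBall (0:ℂ) R)) := by
    apply Measurable.aestronglyMeasurable
    exact (measurable_const.mul measurable_id).inv
  refine Integrable.mono' (hNint.const_mul (Real.pi⁻¹)) hmeas ?_
  have hae : ∀ᵐ w : ℂ ∂(volume.restrict (closedBall (0:ℂ) R)),
      w ∉ ({w : ℂ | w.re = 0} ∪ {w : ℂ | w.im = 0}) := by
    refine ae_restrict_of_ae ?_
    rw [ae_iff]
    refine measure_mono_null (fun a ha => ?_) axes_null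
    by_cases h : a.re = 0
    · exact Or.inl h
    · have ha' : ¬ a.re = 0 → a.im = 0 := by simpa using ha
      exact Or.inr (ha' h)
  filter_upwards [hae] with w hw
  have hre : w.re ≠ 0 := fun h => hw (Or.inl h)
  have him : w.im ≠ 0 := fun h => hw (Or.inr h)
  have hre' : 0 < |w.re| := abs_pos.mpr hre
  have him' : 0 < |w.im| := abs_pos.mpr him
  have habs : Real.sqrt (|w.re| * |w.im|) ≤ ‖w‖ := by
    rw [Complex.norm_def, Complex.normSq_apply]
    apply Real.sqrt_le_sqrt
    nlinarith [_root_.sq_abs w.re, _root_.sq_abs w.im, sq_nonneg (|w.re| - |w.im|)]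
  have hs : Real.sqrt (|w.re| * |w.im|) = |w.re| ^ ((1:ℝ)/2) * |w.im| ^ ((1:ℝ)/2) := by
    rw [Real.sqrt_eq_rpow, Real.mul_rpow (abs_nonneg _) (abs_nonneg _)]
  have hpos : 0 < Real.sqrt (|w.re| * |w.im|) := Real.sqrt_pos.mpr (by positivity)
  have hinv : (‖w‖)⁻¹ ≤ (Real.sqrt (|w.re| * |w.im|))⁻¹ :=
    inv_anti₀ hpos habs
  have hnorm : ‖kk w‖ = Real.pi⁻¹ * (‖w‖)⁻¹ := by
    simp only [kk, norm_inv, norm_mul, Complex.norm_real, Real.norm_eq_abs,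
      abs_of_pos Real.pi_pos, mul_inv]
  rw [hnorm]
  have : (Real.sqrt (|w.re| * |w.im|))⁻¹ = N w := by
    rw [hs, hNdef, mul_inv, ← Real.rpow_neg (abs_nonneg _), ← Real.rpow_neg (abs_nonneg _)]
  rw [← this]
  exact mul_le_mul_of_nonneg_left hinv (by positivity)

lemma kk_locInt : MeasureTheory.LocallyIntegrable kk := by
  rw [MeasureTheory.locallyIntegrable_iff]
  intro K hK
  obtain ⟨R, hR⟩ := hK.isBounded.subset_closedBall 0
  exact (kk_int_ball R).mono_set hR

theorem deriv_step (f : ℂ → ℂ) (hf : ContDiff ℝ (⊤ : ℕ∞) f) (hsupp : HasCompactSupport f) (z : ℂ) :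
    dzbar (fun ζ => ∫ w : ℂ, f w / ((Real.pi : ℂ) * (ζ - w))) z
      = ∫ t : ℂ, dzbar f t * kk (z - t) := by
  have hf1 : ContDiff ℝ 1 f := hf.of_le (by simp)
  set L := ContinuousLinearMap.mul ℝ ℂ with hL
  have hu : (fun ζ => ∫ w : ℂ, f w / ((Real.pi : ℂ) * (ζ - w))) = f ⋆[L] kk := by
    funext ζ
    simp only [convolution_def, hL, ContinuousLinearMap.mul_apply', kk, div_eq_mul_inv]
  have hder := hsupp.hasFDerivAt_convolution_left L hf1 kk_locInt z
  have hfderiv_cont : Continuous (fderiv ℝ f) := hf.continuous_fderiv (by simp)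
  have hfd_supp : HasCompactSupport (fderiv ℝ f) := hsupp.fderiv ℝ
  have hce : ConvolutionExists (fderiv ℝ f) kk (L.precompL ℂ) volume :=
    hfd_supp.convolutionExists_left (L.precompL ℂ) hfderiv_cont kk_locInt
  have happ : ∀ v : ℂ, fderiv ℝ (f ⋆[L] kk) z v = ∫ t : ℂ, (fderiv ℝ f t v) * kk (z - t) := by
    intro v
    rw [hder.fderiv, convolution_def]
    rw [ContinuousLinearMap.integral_apply (hce z)]
    simp only [hL, ContinuousLinearMap.precompL_apply, ContinuousLinearMap.mul_apply']
  have hint : ∀ v : ℂ, Integrable (fun t => (fderiv ℝ f t v) * kk (z - t)) := by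
    intro v
    have hsupp' : HasCompactSupport (fun t => fderiv ℝ f t v) :=
      hfd_supp.comp_left (g := fun T : ℂ →L[ℝ] ℂ => T v) rfl
    have hcont' : Continuous (fun t => fderiv ℝ f t v) := hfderiv_cont.clm_apply continuous_const
    exact hsupp'.convolutionExists_left L hcont' kk_locInt z
  rw [hu]
  simp only [dzbar, pdx, pdy, happ]
  rw [← integral_const_mul, ← integral_add (hint 1) ((hint Complex.I).const_mul _),
    ← integral_div]
  congr 1; funext t; ring

theorem integrableOn_strip {G : ℝ × ℝ → ℂ} (hG : Continuous G) {M : ℝ}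
    (h0 : ∀ p : ℝ × ℝ, M ≤ p.1 → G p = 0) :
    IntegrableOn G (Ioi (0:ℝ) ×ˢ Ioo (-Real.pi) Real.pi) := by
  set S : Set (ℝ × ℝ) := Ioi (0:ℝ) ×ˢ Ioo (-Real.pi) Real.pi with hS
  set K : Set (ℝ × ℝ) := Icc (0:ℝ) M ×ˢ Icc (-Real.pi) Real.pi with hK
  have hSmeas : MeasurableSet S := measurableSet_Ioi.prod measurableSet_Ioo
  have hKmeas : MeasurableSet K := measurableSet_Icc.prod measurableSet_Icc
  have h1 : IntegrableOn G (S ∩ K) :=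
    (hG.continuousOn.integrableOn_compact (isCompact_Icc.prod isCompact_Icc)).mono_set
      inter_subset_right
  have h2 : IntegrableOn G (S \ K) := by
    have : EqOn (fun _ => (0:ℂ)) G (S \ K) := by
      intro p hp
      obtain ⟨⟨hp1, hp2⟩, hpK⟩ := hp
      have : M ≤ p.1 := by
        by_contra hM
        exact hpK ⟨⟨le_of_lt hp1, le_of_not_ge hM⟩, ⟨hp2.1.le, hp2.2.le⟩⟩
      exact ((h0 p this).symm : _)
    exact (integrableOn_zero (ε' := ℂ)).congr_fun this (hSmeas.diff hKmeas)
  have := h1.union h2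
  rwa [Set.inter_union_diff] at this

theorem key (f : ℂ → ℂ) (hf : ContDiff ℝ (⊤ : ℕ∞) f) (hsupp : HasCompactSupport f) (z : ℂ) :
    ∫ w : ℂ, dzbar f (z - w) * kk w = f z := by
  obtain ⟨R, hR⟩ := hsupp.isBounded.subset_closedBall 0
  set M : ℝ := |R| + ‖z‖ + 1 with hM
  set E : ℝ → ℂ := fun θ => Complex.exp ((θ:ℂ) * Complex.I) with hE
  set P : ℝ × ℝ → ℂ := fun p => z - (p.1 : ℂ) * E p.2 with hP
  set A : ℝ × ℝ → ℂ := fun p => fderiv ℝ f (P p) (-E p.2) with hA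
  set C : ℝ × ℝ → ℂ := fun p => E p.2 * dz f (P p) - E (-p.2) * dzbar f (P p) with hC
  -- basic facts about E
  have hEcont : Continuous E := Complex.continuous_exp.comp (Complex.continuous_ofReal.mul continuous_const)
  have hEabs : ∀ θ : ℝ, ‖E θ‖ = 1 := fun θ => Complex.norm_exp_ofReal_mul_I θ
  have hEne : ∀ θ : ℝ, E θ ≠ 0 := fun θ => Complex.exp_ne_zero _
  have hEinv : ∀ θ : ℝ, (E θ)⁻¹ = E (-θ) := by
    intro θ; rw [hE]; simp only [← Complex.exp_neg]; push_cast; ring_nf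
  have hEconj : ∀ θ : ℝ, (starRingEnd ℂ) (E θ) = E (-θ) := by
    intro θ; rw [hE]; simp only [← Complex.exp_conj]; congr 1
    simp [Complex.ext_iff]
  have hEpi : E Real.pi = -1 := by rw [hE]; exact Complex.exp_pi_mul_I
  have hEnegpi : E (-Real.pi) = -1 := by
    rw [← hEinv, hEpi]; norm_num
  -- continuity
  have hPcont : Continuous P :=
    continuous_const.sub ((Complex.continuous_ofReal.comp continuous_fst).mul
      (hEcont.comp continuous_snd))
  have hfc : Continuous (fderiv ℝ f) := hf.continuous_fderiv (by simp)
  have hdzc : Continuous (dz f) := by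
    apply Continuous.div_const
    exact ((hfc.clm_apply continuous_const).sub
      (continuous_const.mul (hfc.clm_apply continuous_const)))
  have hdzbarc : Continuous (dzbar f) := by
    apply Continuous.div_const
    exact ((hfc.clm_apply continuous_const).add
      (continuous_const.mul (hfc.clm_apply continuous_const)))
  have hAcont : Continuous A :=
    (hfc.comp hPcont).clm_apply (hEcont.comp continuous_snd).neg
  have hCcont : Continuous C :=
    ((hEcont.comp continuous_snd).mul (hdzc.comp hPcont)).sub
      ((hEcont.comp continuous_snd.neg).mul (hdzbarc.comp hPcont))
  -- vanishing for large radius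
  have hPout : ∀ p : ℝ × ℝ, M ≤ |p.1| → P p ∉ tsupport f := by
    intro p hp hmem
    have h1 : ‖P p‖ ≥ |p.1| - ‖z‖ := by
      have : ‖(p.1:ℂ) * E p.2‖ = |p.1| := by
        simp [norm_mul, hEabs, Complex.norm_real]
      calc ‖P p‖ = ‖(p.1:ℂ) * E p.2 - z‖ := by rw [hP]; simp [norm_sub_rev]
        _ ≥ ‖(p.1:ℂ) * E p.2‖ - ‖z‖ := norm_sub_norm_le _ _
        _ = |p.1| - ‖z‖ := by rw [this]
    have h2 : ‖P p‖ ≤ R := mem_closedBall_zero_iff.mp (hR hmem)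
    have : M - ‖z‖ ≤ R := by linarith
    rw [hM] at this
    have := le_abs_self R
    linarith
  have hfd0 : ∀ p : ℝ × ℝ, M ≤ |p.1| → fderiv ℝ f (P p) = 0 := fun p hp =>
    image_eq_zero_of_notMem_tsupport (fun h => hPout p hp (tsupport_fderiv_subset ℝ h))
  have hA0 : ∀ p : ℝ × ℝ, M ≤ |p.1| → A p = 0 := by
    intro p hp; rw [hA]; simp [hfd0 p hp]
  have hC0 : ∀ p : ℝ × ℝ, M ≤ |p.1| → C p = 0 := by
    intro p hp; rw [hC]; simp [dz, dzbar, pdx, pdy, hfd0 p hp]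
  have hf0 : ∀ p : ℝ × ℝ, M ≤ |p.1| → f (P p) = 0 := fun p hp =>
    image_eq_zero_of_notMem_tsupport (hPout p hp)
  -- derivative facts
  have hEder : ∀ θ : ℝ, HasDerivAt E (Complex.I * E θ) θ := by
    intro θ
    have h1 : HasDerivAt (fun t : ℝ => (t : ℂ)) 1 θ := by
      exact Complex.ofRealCLM.hasDerivAt (x := θ)
    have h2 : HasDerivAt (fun t : ℝ => (t : ℂ) * Complex.I) Complex.I θ := by
      simpa using h1.mul_const Complex.I
    have := h2.cexp
    simpa [hE, mul_comm] using this
  have hinner_r : ∀ (θ r : ℝ), HasDerivAt (fun r : ℝ => z - (r:ℂ) * E θ) (-E θ) r := by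
    intro θ r
    have h1 : HasDerivAt (fun t : ℝ => (t : ℂ)) 1 r := by
      exact Complex.ofRealCLM.hasDerivAt (x := r)
    simpa using (h1.mul_const (E θ)).const_sub z
  have hgr : ∀ (θ r : ℝ), HasDerivAt (fun r : ℝ => f (z - (r:ℂ) * E θ)) (A (r, θ)) r := by
    intro θ r
    have hd := (hf.differentiable (by simp) (z - (r:ℂ) * E θ)).hasFDerivAt
    have := hd.comp_hasDerivAt r (hinner_r θ r)
    simp [hA, hP] at this ⊢; exact this
  have hinner_θ : ∀ (r θ : ℝ), HasDerivAt (fun θ : ℝ => z - (r:ℂ) * E θ)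
      (-((r:ℂ) * (Complex.I * E θ))) θ := by
    intro r θ
    simpa using ((hEder θ).const_mul (r:ℂ)).const_sub z
  have hgθ : ∀ (r θ : ℝ), HasDerivAt (fun θ : ℝ => f (z - (r:ℂ) * E θ))
      (fderiv ℝ f (P (r, θ)) (-((r:ℂ) * (Complex.I * E θ)))) θ := by
    intro r θ
    have hd := (hf.differentiable (by simp) (z - (r:ℂ) * E θ)).hasFDerivAt
    have := hd.comp_hasDerivAt θ (hinner_θ r θ)
    simp [hP] at this ⊢; exact this
  have hM0 : (0:ℝ) ≤ M := by rw [hM]; positivity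
  -- integrability on the strip
  have hIA : IntegrableOn A (Ioi (0:ℝ) ×ˢ Ioo (-Real.pi) Real.pi) :=
    integrableOn_strip hAcont (M := M) (fun p hp => hA0 p (le_trans hp (le_abs_self _)))
  have hIC : IntegrableOn C (Ioi (0:ℝ) ×ˢ Ioo (-Real.pi) Real.pi) :=
    integrableOn_strip hCcont (M := M) (fun p hp => hC0 p (le_trans hp (le_abs_self _)))
  -- radial integral
  have hradial : ∀ θ : ℝ, ∫ r in Ioi (0:ℝ), A (r, θ) = -f z := by
    intro θ
    have hic : Continuous (fun r : ℝ => z - (r:ℂ) * E θ) :=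
      continuous_const.sub (Complex.continuous_ofReal.mul continuous_const)
    have hcont0 : ContinuousWithinAt (fun r : ℝ => f (z - (r:ℂ) * E θ)) (Ici 0) 0 :=
      ((hf.continuous).comp hic).continuousWithinAt
    have hderiv : ∀ r ∈ Ioi (0:ℝ), HasDerivAt (fun r : ℝ => f (z - (r:ℂ) * E θ)) (A (r,θ)) r :=
      fun r _ => hgr θ r
    have hint : IntegrableOn (fun r => A (r, θ)) (Ioi 0) := by
      have hcs : HasCompactSupport (fun r : ℝ => A (r, θ)) := by
        apply HasCompactSupport.intro (isCompact_Icc (a := -M) (b := M))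
        intro x hx
        apply hA0
        simp only [mem_Icc, not_and_or, not_le] at hx
        rcases hx with h | h
        · exact le_trans (by linarith) (neg_le_abs x)
        · exact le_trans h.le (le_abs_self x)
      exact ((hAcont.comp (continuous_id.prodMk continuous_const)).integrable_of_hasCompactSupport
        hcs).integrableOn
    have htend : Tendsto (fun r : ℝ => f (z - (r:ℂ) * E θ)) atTop (𝓝 0) := by
      have heq : (fun _ : ℝ => (0:ℂ)) =ᶠ[atTop] fun r : ℝ => f (z - (r:ℂ) * E θ) := by
        filter_upwards [eventually_ge_atTop M] with r hr
        exact (hf0 (r, θ) (le_trans hr (le_abs_self r))).symm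
      exact tendsto_const_nhds.congr' heq
    have := integral_Ioi_of_hasDerivAt_of_tendsto hcont0 hderiv hint htend
    simpa using this
  have hSA : ∫ p in Ioi (0:ℝ) ×ˢ Ioo (-Real.pi) Real.pi, A p = (2 * Real.pi : ℝ) • (-f z) := by
    have h1 : ∫ p in Ioi (0:ℝ) ×ˢ Ioo (-Real.pi) Real.pi, A p
        = ∫ θ in Ioo (-Real.pi) Real.pi, ∫ r in Ioi (0:ℝ), A (r, θ) := by
      rw [Measure.volume_eq_prod, ← Measure.prod_restrict]
      apply integral_prod_symm
      rw [Measure.prod_restrict, ← Measure.volume_eq_prod]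
      exact hIA
    rw [h1, setIntegral_congr_fun measurableSet_Ioo (fun θ _ => hradial θ), setIntegral_const,
      Real.volume_real_Ioo_of_le (by linarith [Real.pi_pos])]
    congr 1
    ring
  -- angular integral
  have hangular : ∀ r : ℝ, r ∈ Ioi (0:ℝ) → ∫ θ in Ioo (-Real.pi) Real.pi, C (r, θ) = 0 := by
    intro r hr
    have hrne : ((r:ℂ)) ≠ 0 := by
      simpa using ne_of_gt (hr : (0:ℝ) < r)
    have hderiv : ∀ θ ∈ uIcc (-Real.pi) Real.pi,
        HasDerivAt (fun θ : ℝ => (Complex.I / (r:ℂ)) * f (z - (r:ℂ) * E θ)) (C (r, θ)) θ := by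
      intro θ _
      have h1 := (hgθ r θ).const_mul (Complex.I / (r:ℂ))
      refine h1.congr_deriv ?_
      symm
      rw [fderiv_decomp]
      have hconj : (starRingEnd ℂ) (-((r:ℂ) * (Complex.I * E θ)))
          = (r:ℂ) * (Complex.I * E (-θ)) := by
        rw [map_neg, map_mul, map_mul, Complex.conj_ofReal, Complex.conj_I, hEconj]
        ring
      rw [hconj]
      have h2 : (starRingEnd ℂ) (E θ) = E (-θ) := hEconj θ
      field_simp
      ring_nf
      simp only [Complex.I_sq]
      ring
    have hii : IntervalIntegrable (fun θ => C (r, θ)) volume (-Real.pi) Real.pi :=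
      ((hCcont.comp ((continuous_const.prodMk continuous_id)))).intervalIntegrable _ _
    have hftc := intervalIntegral.integral_eq_sub_of_hasDerivAt hderiv hii
    rw [← integral_Ioc_eq_integral_Ioo,
      ← intervalIntegral.integral_of_le (by linarith [Real.pi_pos] : -Real.pi ≤ Real.pi),
      hftc, hEpi, hEnegpi]
    ring
  have hSC : ∫ p in Ioi (0:ℝ) ×ˢ Ioo (-Real.pi) Real.pi, C p = 0 := by
    have h1 : ∫ p in Ioi (0:ℝ) ×ˢ Ioo (-Real.pi) Real.pi, C p
        = ∫ r in Ioi (0:ℝ), ∫ θ in Ioo (-Real.pi) Real.pi, C (r, θ) := by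
      rw [Measure.volume_eq_prod, ← Measure.prod_restrict]
      apply integral_prod
      rw [Measure.prod_restrict, ← Measure.volume_eq_prod]
      exact hIC
    rw [h1, setIntegral_congr_fun measurableSet_Ioi hangular]
    simp
  -- assembly via polar coordinates
  rw [← Complex.integral_comp_polarCoord_symm (fun w => dzbar f (z - w) * kk w)]
  have htarget : polarCoord.target = Ioi (0:ℝ) ×ˢ Ioo (-Real.pi) Real.pi := rfl
  rw [htarget]
  have hpt : ∀ p ∈ Ioi (0:ℝ) ×ˢ Ioo (-Real.pi) Real.pi,
      p.1 • (dzbar f (z - Complex.polarCoord.symm p) * kk (Complex.polarCoord.symm p))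
        = (-(2 * (Real.pi:ℂ)))⁻¹ * (A p + C p) := by
    intro p hp
    have hr : (0:ℝ) < p.1 := hp.1
    have hrne : ((p.1:ℝ):ℂ) ≠ 0 := by simpa using ne_of_gt hr
    have hsymm : Complex.polarCoord.symm p = (p.1:ℂ) * E p.2 := by
      rw [Complex.polarCoord_symm_apply, hE]
      simp only [Complex.exp_mul_I]
      push_cast
      ring
    have hAC : A p + C p = -2 * (E (-p.2) * dzbar f (P p)) := by
      have hfd := fderiv_decomp f (P p) (-E p.2)
      rw [show (starRingEnd ℂ) (-E p.2) = -E (-p.2) from by rw [map_neg, hEconj]] at hfd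
      simp only [hA, hC]
      rw [hfd]
      ring
    rw [hsymm, show z - (p.1:ℂ) * E p.2 = P p from rfl, hAC, kk]
    simp only [Complex.real_smul, mul_inv, hEinv]
    have hpine : ((Real.pi:ℝ):ℂ) ≠ 0 := by
      simpa using Real.pi_ne_zero
    field_simp
  rw [setIntegral_congr_fun (measurableSet_Ioi.prod measurableSet_Ioo) hpt,
    integral_const_mul, integral_add hIA hIC, hSA, hSC, add_zero]
  simp only [Complex.real_smul]
  have hpine : ((Real.pi:ℝ):ℂ) ≠ 0 := by simpa using Real.pi_ne_zero
  push_cast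
  field_simp

end DbarAux

open DbarAux in
/-- 1/(πz) is a fundamental solution of ∂̄: for smooth compactly
supported f, u(z) = ∫ f(w)/(π(z-w)) dA(w) satisfies ∂_z̄ u = f. -/
theorem dbar_fundamental_solution (f : ℂ → ℂ) (hf : ContDiff ℝ (⊤ : ℕ∞) f)
    (hsupp : HasCompactSupport f) (z : ℂ) :
    dzbar (fun ζ => ∫ w : ℂ, f w / ((Real.pi : ℂ) * (ζ - w))) z = f z := by
  rw [deriv_step f hf hsupp z]
  have hchg : ∫ t : ℂ, dzbar f t * kk (z - t) = ∫ w : ℂ, dzbar f (z - w) * kk w := by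
    set F : ℂ → ℂ := fun t => dzbar f t * kk (z - t) with hF
    have h0 : ∀ w : ℂ, F (z - w) = dzbar f (z - w) * kk w := by
      intro w; rw [hF]; simp
    have h1 : ∫ x : ℂ, F (z - x) = ∫ x : ℂ, F x := by
      simp_rw [sub_eq_add_neg]
      have h2 : ∫ x : ℂ, F (z + -x) = ∫ x : ℂ, F (z + x) :=
        integral_neg_eq_self (fun y => F (z + y)) volume
      rw [h2]
      exact integral_add_left_eq_self (μ := volume) F z
    calc ∫ t : ℂ, F t = ∫ x : ℂ, F (z - x) := h1.symm
      _ = ∫ w : ℂ, dzbar f (z - w) * kk w := by simp_rw [h0]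
  rw [hchg]
  exact key f hf hsupp z
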